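/- Let C be an extremal set (ε_C = d_C) in a finite simple connected graph Γ, with antipodal set D = C_{ε_C}. Then every eigenvalue in the C-local spectrum also lies in the D-local spectrum, i.e. ev_C Γ ⊆ ev_D Γ. -/

import Mathlib

open Finset Polynomial BigOperators
open scoped Classical

noncomputable section

/-- The eigenspace of a real matrix `A` (viewed as an operator on Euclidean space)
for the value `μ`. -/
def eigSp {n : ℕ} (A : Matrix (Fin n) (Fin n) ℝ) (μ : ℝ) :
    Submodule ℝ (EuclideanSpace ℝ (Fin n)) :=
  Module.End.eigenspace (Matrix.toEuclideanLin A) μ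

/-- Orthogonal projection onto the `μ`-eigenspace of `A`. -/
def eigProj {n : ℕ} (A : Matrix (Fin n) (Fin n) ℝ) (μ : ℝ) (v : EuclideanSpace ℝ (Fin n)) :
    EuclideanSpace ℝ (Fin n) :=
  (Submodule.orthogonalProjection (eigSp A μ) v : EuclideanSpace ℝ (Fin n))

/-- The weighted characteristic vector `ρS = Σ_{i∈S} ν_i e_i`. -/
def rho {n : ℕ} (ν : EuclideanSpace ℝ (Fin n)) (S : Finset (Fin n)) :
    EuclideanSpace ℝ (Fin n) :=
  WithLp.toLp 2 (fun i => if i ∈ S then ν i else 0)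

/-- The unit vector `e_S = ρS / ‖ρS‖`. -/
def unitVec {n : ℕ} (ν : EuclideanSpace ℝ (Fin n)) (S : Finset (Fin n)) :
    EuclideanSpace ℝ (Fin n) :=
  (‖rho ν S‖)⁻¹ • rho ν S

/-- The `S`-local multiplicity of `μ`: `m_S(μ) = ‖E_μ e_S‖²`. -/
def mloc {n : ℕ} (A : Matrix (Fin n) (Fin n) ℝ) (ν : EuclideanSpace ℝ (Fin n))
    (S : Finset (Fin n)) (μ : ℝ) : ℝ :=
  ‖eigProj A μ (unitVec ν S)‖ ^ 2

/-- The `S`-local spectrum: the set of `μ` whose eigenspace sees `ρS`. -/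
def evloc {n : ℕ} (A : Matrix (Fin n) (Fin n) ℝ) (ν : EuclideanSpace ℝ (Fin n))
    (S : Finset (Fin n)) : Set ℝ :=
  {μ | eigProj A μ (rho ν S) ≠ 0}

/-- Distance from a vertex `i` to a set of vertices `S`. -/
def dSet {n : ℕ} (G : SimpleGraph (Fin n)) (S : Finset (Fin n)) (i : Fin n) : ℕ :=
  sInf {k | ∃ j ∈ S, G.dist i j = k}

/-- Eccentricity (covering radius) of a vertex set `S`. -/
def eccS {n : ℕ} (G : SimpleGraph (Fin n)) (S : Finset (Fin n)) : ℕ :=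
  Finset.univ.sup (dSet G S)

/-- The `k`-th subconstituent `S_k = {i : dist(i,S) = k}`. -/
def subcons {n : ℕ} (G : SimpleGraph (Fin n)) (S : Finset (Fin n)) (k : ℕ) :
    Finset (Fin n) :=
  Finset.univ.filter (fun i => dSet G S i = k)

/-- `p(A)·v` for a polynomial `p`, a matrix `A` and a Euclidean vector `v`. -/
def aevalVec {n : ℕ} (A : Matrix (Fin n) (Fin n) ℝ) (p : Polynomial ℝ)
    (v : EuclideanSpace ℝ (Fin n)) : EuclideanSpace ℝ (Fin n) :=
  WithLp.toLp 2 ((Polynomial.aeval A p).mulVec v)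

/-- Moment-like parameter `π_l = ∏_{h≠l} |μ_l − μ_h|` for an enumeration `μ`. -/
def piC {d : ℕ} (μ : Fin (d + 1) → ℝ) (l : Fin (d + 1)) : ℝ :=
  ∏ h ∈ Finset.univ.erase l, |μ l - μ h|

/-! Let `μ ∈ ev_C Γ` and `p = ∏ (X - θ)` over `θ ∈ ev_C Γ \ {μ}`; extremality makes `p` monic of
degree `ε_C`. Spectrally, `p(A) ρC` lies in the `μ`-eigenspace, so it is orthogonal to `ρD` if
`μ ∉ ev_D Γ`. Combinatorially, `(A^k ρC)_j = 0` for `k < ε_C` while `(A^ε_C ρC)_j > 0` at every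
`j ∈ D`, so `⟪p(A) ρC, ρD⟫ > 0`. -/

open scoped RealInnerProductSpace
open Module.End Matrix

namespace LinearMap.IsSymmetric

variable {E : Type*} [NormedAddCommGroup E] [InnerProductSpace ℝ E] [FiniteDimensional ℝ E]
  {T : E →ₗ[ℝ] E}

theorem aeval_apply_eq_sum_eigenvectorBasis (hT : T.IsSymmetric) {n : ℕ}
    (hn : Module.finrank ℝ E = n) (p : ℝ[X]) (v : E) :
    aeval T p v = ∑ i, (p.eval (hT.eigenvalues hn i) * ⟪hT.eigenvectorBasis hn i, v⟫) •
      hT.eigenvectorBasis hn i := by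
  conv_lhs => rw [← (hT.eigenvectorBasis hn).sum_repr' v]
  simp only [map_sum, map_smul, aeval_apply_of_hasEigenvector
    (hT.hasEigenvector_eigenvectorBasis hn _), smul_smul, mul_comm]
  rfl

theorem aeval_apply_mem_eigenspace (hT : T.IsSymmetric) {p : ℝ[X]} {u : E} {μ₀ : ℝ}
    (hp : ∀ μ ≠ μ₀, u ∉ (eigenspace T μ)ᗮ → p.eval μ = 0) :
    aeval T p u ∈ eigenspace T μ₀ := by
  rw [hT.aeval_apply_eq_sum_eigenvectorBasis rfl]
  refine Submodule.sum_mem _ fun i _ => ?_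
  have hb := (hT.hasEigenvector_eigenvectorBasis rfl i).1
  by_cases hi : hT.eigenvalues rfl i = μ₀
  · exact Submodule.smul_mem _ _ (hi ▸ hb)
  · have hcoeff : p.eval (hT.eigenvalues rfl i) * ⟪hT.eigenvectorBasis rfl i, u⟫ = 0 := by
      by_cases hu : u ∈ (eigenspace T (hT.eigenvalues rfl i))ᗮ
      · rw [Submodule.inner_right_of_mem_orthogonal hb hu, mul_zero]
      · rw [hp _ hi hu, zero_mul]
    rw [hcoeff, zero_smul]
    exact zero_mem _

end LinearMap.IsSymmetric

theorem Matrix.aeval_mulVec_apply_of_monic {R ι : Type*} [CommSemiring R] [Fintype ι]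
    [DecidableEq ι] {M : Matrix ι ι R} {p : R[X]} (hp : p.Monic) {x : ι → R} {j : ι}
    (hx : ∀ k < p.natDegree, (M ^ k *ᵥ x) j = 0) :
    (aeval M p *ᵥ x) j = (M ^ p.natDegree *ᵥ x) j := by
  rw [aeval_eq_sum_range, Matrix.sum_mulVec, Finset.sum_apply, Finset.sum_range_succ,
    Finset.sum_eq_zero, hp.coeff_natDegree, one_smul, zero_add]
  intro k hk
  rw [Matrix.smul_mulVec, Pi.smul_apply, hx k (mem_range.1 hk), smul_zero]

theorem Matrix.aeval_toEuclideanLin {ι : Type*} [Fintype ι] [DecidableEq ι] (A : Matrix ι ι ℝ)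
    (p : ℝ[X]) :
    aeval (Matrix.toEuclideanLin A) p = Matrix.toEuclideanLin (aeval A p) := by
  induction p using Polynomial.induction_on' with
  | add p q hp hq => simp only [map_add, hp, hq]
  | monomial k a =>
    simp only [aeval_monomial, ← Algebra.smul_def, map_smul, Matrix.toLpLin_pow]

namespace SimpleGraph

variable {V α : Type*} [Fintype V] [DecidableEq V] (G : SimpleGraph V) [DecidableRel G.Adj]

theorem adjMatrix_pow_mulVec_apply_eq_zero [Semiring α] {k : ℕ} {x : V → α} {j : V}
    (hx : ∀ u, x u ≠ 0 → k < G.dist j u) : (G.adjMatrix α ^ k *ᵥ x) j = 0 := by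
  rw [mulVec, dotProduct]
  refine Finset.sum_eq_zero fun u _ => ?_
  by_cases hu : x u = 0
  · rw [hu, mul_zero]
  · have hwalks : IsEmpty {q : G.Walk j u | q.length = k} :=
      ⟨fun q => (hx u hu).not_ge (q.2 ▸ dist_le q.1)⟩
    rw [adjMatrix_pow_apply_eq_card_walk, Fintype.card_eq_zero, Nat.cast_zero, zero_mul]

theorem adjMatrix_pow_dist_mulVec_apply_pos [Semiring α] [PartialOrder α] [IsStrictOrderedRing α]
    {x : V → α} (hx : 0 ≤ x) {j u : V} (hu : 0 < x u) (hr : G.Reachable j u) :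
    0 < (G.adjMatrix α ^ G.dist j u *ᵥ x) j := by
  have hwalk : 0 < (G.adjMatrix α ^ G.dist j u) j u := by
    obtain ⟨q, hq⟩ := hr.exists_walk_length_eq_dist
    rw [adjMatrix_pow_apply_eq_card_walk, Nat.cast_pos, Fintype.card_pos_iff]
    exact ⟨⟨q, hq⟩⟩
  rw [mulVec, dotProduct]
  refine Finset.sum_pos' (fun v _ => mul_nonneg ?_ (hx v)) ⟨u, mem_univ u, mul_pos hwalk hu⟩
  rw [adjMatrix_pow_apply_eq_card_walk]
  exact Nat.cast_nonneg _

end SimpleGraph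

section LocalSpectrum

variable {n : ℕ}

theorem aevalVec_eq_aeval_toEuclideanLin (A : Matrix (Fin n) (Fin n) ℝ) (p : ℝ[X])
    (v : EuclideanSpace ℝ (Fin n)) :
    aevalVec A p v = aeval (Matrix.toEuclideanLin A) p v := by
  rw [Matrix.aeval_toEuclideanLin]
  rfl

theorem eigProj_eq_zero_iff {A : Matrix (Fin n) (Fin n) ℝ} {μ : ℝ}
    {v : EuclideanSpace ℝ (Fin n)} : eigProj A μ v = 0 ↔ v ∈ (eigSp A μ)ᗮ := by
  simp [eigProj, Submodule.starProjection_apply_eq_zero_iff]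

theorem inner_rho (ν x : EuclideanSpace ℝ (Fin n)) (S : Finset (Fin n)) :
    ⟪x, rho ν S⟫ = ∑ j ∈ S, x j * ν j := by
  simp [PiLp.inner_apply, rho, mul_comm, Finset.sum_ite_mem]

variable {G : SimpleGraph (Fin n)} {S : Finset (Fin n)}

theorem dSet_le_dist (i : Fin n) {j : Fin n} (hj : j ∈ S) : dSet G S i ≤ G.dist i j :=
  Nat.sInf_le ⟨j, hj, rfl⟩

theorem exists_dist_eq_dSet (hS : S.Nonempty) (i : Fin n) : ∃ j ∈ S, G.dist i j = dSet G S i :=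
  Nat.sInf_mem (s := {k | ∃ j ∈ S, G.dist i j = k}) (hS.elim fun j hj => ⟨_, j, hj, rfl⟩)

theorem subcons_eccS_nonempty (hS : S.Nonempty) : (subcons G S (eccS G S)).Nonempty := by
  obtain ⟨i, -, hi⟩ := Finset.exists_mem_eq_sup univ (hS.mono (subset_univ S)) (dSet G S)
  exact ⟨i, mem_filter.2 ⟨mem_univ i, hi.symm⟩⟩

theorem aevalVec_rho_apply_pos [DecidableRel G.Adj] (hconn : G.Connected)
    {ν : EuclideanSpace ℝ (Fin n)} (hν : ∀ i, 0 < ν i) (hS : S.Nonempty) {p : ℝ[X]}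
    (hp : p.Monic) {j : Fin n} (hj : dSet G S j = p.natDegree) :
    0 < aevalVec (G.adjMatrix ℝ) p (rho ν S) j := by
  obtain ⟨u, huS, hu⟩ := exists_dist_eq_dSet (G := G) hS j
  have hρ : ∀ v, (rho ν S).ofLp v ≠ 0 → v ∈ S := fun v hv => by
    by_contra h
    simp [rho, h] at hv
  rw [aevalVec, PiLp.toLp_apply, Matrix.aeval_mulVec_apply_of_monic hp, ← hj, ← hu]
  · refine G.adjMatrix_pow_dist_mulVec_apply_pos (fun v => ?_) ?_ (hconn j u)
    · simp only [rho, Pi.zero_apply]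
      split_ifs
      exacts [(hν v).le, le_rfl]
    · simpa [rho, huS] using hν u
  · refine fun k hk => G.adjMatrix_pow_mulVec_apply_eq_zero fun v hv => ?_
    exact hk.trans_le (hj ▸ dSet_le_dist j (hρ v hv))

end LocalSpectrum

theorem local_spectrum_subset_antipodal_general {n : ℕ} (G : SimpleGraph (Fin n)) [DecidableRel G.Adj]
    (hconn : G.Connected)
    (ν : EuclideanSpace ℝ (Fin n)) (hν : ∀ i, 0 < ν i)
    (C : Finset (Fin n)) (hC : C.Nonempty)
    (hext : eccS G C + 1 = (evloc (G.adjMatrix ℝ) ν C).ncard) :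
    evloc (G.adjMatrix ℝ) ν C ⊆ evloc (G.adjMatrix ℝ) ν (subcons G C (eccS G C)) := by
  intro μ hμ
  have hT : (Matrix.toEuclideanLin (G.adjMatrix ℝ)).IsSymmetric :=
    Matrix.isSymmetric_toEuclideanLin_iff.2 (G.isHermitian_adjMatrix ℝ)
  have hfin : (evloc (G.adjMatrix ℝ) ν C).Finite := Set.finite_of_ncard_pos (hext ▸ Nat.succ_pos _)
  set p : ℝ[X] := ∏ θ ∈ hfin.toFinset.erase μ, (X - Polynomial.C θ)
  have hdeg : p.natDegree = eccS G C := by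
    rw [natDegree_finsetProd_X_sub_C_eq_card, card_erase_of_mem (hfin.mem_toFinset.2 hμ),
      ← Set.ncard_eq_toFinset_card _ hfin, ← hext, Nat.add_sub_cancel]
  set w := aevalVec (G.adjMatrix ℝ) p (rho ν C) with hw_def
  have hw : w ∈ eigSp (G.adjMatrix ℝ) μ := by
    rw [hw_def, aevalVec_eq_aeval_toEuclideanLin]
    refine hT.aeval_apply_mem_eigenspace fun θ hθ hθC => ?_
    rw [eval_prod]
    refine prod_eq_zero (mem_erase.2 ⟨hθ, hfin.mem_toFinset.2 ?_⟩) (by simp)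
    exact mt eigProj_eq_zero_iff.1 hθC
  have hpos : 0 < ⟪w, rho ν (subcons G C (eccS G C))⟫ := by
    rw [inner_rho]
    refine sum_pos (fun j hj => mul_pos ?_ (hν j)) (subcons_eccS_nonempty hC)
    exact aevalVec_rho_apply_pos hconn hν hC (monic_prod_X_sub_C _ _)
      (hdeg ▸ (mem_filter.1 hj).2)
  by_contra hD
  exact hpos.ne'
    (Submodule.inner_right_of_mem_orthogonal hw (eigProj_eq_zero_iff.1 (not_not.1 hD)))

theorem local_spectrum_subset_antipodal {n : ℕ} (hn : 0 < n) (G : SimpleGraph (Fin n)) [DecidableRel G.Adj]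
    (hconn : G.Connected)
    (ν : EuclideanSpace ℝ (Fin n)) (hν : ∀ i, 0 < ν i) (lam0 : ℝ)
    (hPerron : (G.adjMatrix ℝ).mulVec ν = lam0 • ν)
    (C : Finset (Fin n)) (hC : C.Nonempty)
    (hext : eccS G C + 1 = (evloc (G.adjMatrix ℝ) ν C).ncard) :
    evloc (G.adjMatrix ℝ) ν C ⊆ evloc (G.adjMatrix ℝ) ν (subcons G C (eccS G C)) :=
  local_spectrum_subset_antipodal_general G hconn ν hν C hC hext
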